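/- arXiv:2111.01040 — 10 statements merged into one kernel-verified Lean document; each statement's English description precedes it below -/
import Mathlib

section
/- Let b_1 > 0 and b_2, ..., b_n ≥ 0 be real numbers, and let p ∈ (0,1). Then ∑_{i=1}^n b_i / (∑_{j=1}^i b_j)^p ≤ (1/(1-p)) · (∑_{i=1}^n b_i)^{1-p}. -/
/-! With partial sums `S i = b 1 + ⋯ + b i` and `q = 1 - p`, each term is bounded by the
increment of `S ^ q / q`: the inequality `(t - s) / t ^ p ≤ (t ^ q - s ^ q) / q` for `0 ≤ s ≤ t`
is the weighted AM–GM inequality `s ^ q * t ^ p ≤ q * s + p * t` in disguise. The sum then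
telescopes to `S n ^ q / q`. -/

open Finset

lemma sub_div_rpow_le_rpow_sub_rpow_div {s t p : ℝ} (hs : 0 ≤ s) (hst : s ≤ t)
    (hp : 0 ≤ p) (hp1 : p < 1) :
    (t - s) / t ^ p ≤ (t ^ (1 - p) - s ^ (1 - p)) / (1 - p) := by
  have hq : 0 < 1 - p := by linarith
  rcases hst.eq_or_lt' with rfl | hst
  · simp
  have ht : 0 < t := hs.trans_lt hst
  have hamgm : s ^ (1 - p) * t ^ p ≤ (1 - p) * s + p * t :=
    Real.geom_mean_le_arith_mean2_weighted hq.le hp hs ht.le (by ring)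
  have htt : t ^ (1 - p) * t ^ p = t := by
    rw [← Real.rpow_add ht, sub_add_cancel, Real.rpow_one]
  rw [div_le_div_iff₀ (Real.rpow_pos_of_pos ht p) hq]
  nlinarith

lemma sum_div_rpow_partialSum_le {b : ℕ → ℝ} {p : ℝ} (hp : 0 ≤ p) (hp1 : p < 1) :
    ∀ n, (∀ i ∈ Icc 1 n, 0 ≤ b i) →
      ∑ i ∈ Icc 1 n, b i / (∑ j ∈ Icc 1 i, b j) ^ p ≤ (∑ i ∈ Icc 1 n, b i) ^ (1 - p) / (1 - p)
  | 0, _ => by simpa using div_nonneg (Real.rpow_nonneg le_rfl _) (sub_nonneg.2 hp1.le)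
  | n + 1, hb => by
    have hb' : ∀ i ∈ Icc 1 n, 0 ≤ b i := fun i hi => hb i (Icc_subset_Icc_right n.le_succ hi)
    have hbn : 0 ≤ b (n + 1) := hb (n + 1) (by simp)
    have ih := sum_div_rpow_partialSum_le hp hp1 n hb'
    have hstep := sub_div_rpow_le_rpow_sub_rpow_div (sum_nonneg hb')
      (le_add_of_nonneg_right hbn) hp hp1
    rw [add_sub_cancel_left] at hstep
    rw [sum_Icc_succ_top (by omega), sum_Icc_succ_top (by omega)]
    calc _ ≤ (∑ i ∈ Icc 1 n, b i) ^ (1 - p) / (1 - p) +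
          ((∑ i ∈ Icc 1 n, b i + b (n + 1)) ^ (1 - p) - (∑ i ∈ Icc 1 n, b i) ^ (1 - p)) / (1 - p) :=
          add_le_add ih hstep
      _ = _ := by ring

theorem stmt_0_general (n : ℕ) (b : ℕ → ℝ) (p : ℝ)
    (hb1 : 0 < b 1) (hb : ∀ i, 2 ≤ i → i ≤ n → 0 ≤ b i)
    (hp : 0 < p) (hp1 : p < 1) :
    ∑ i ∈ Icc 1 n, b i / (∑ j ∈ Icc 1 i, b j) ^ p
      ≤ (1 / (1 - p)) * (∑ i ∈ Icc 1 n, b i) ^ (1 - p) := by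
  have hb_nonneg : ∀ i ∈ Icc 1 n, 0 ≤ b i := by
    intro i hi
    obtain ⟨hi1, hin⟩ := mem_Icc.mp hi
    rcases hi1.eq_or_lt with rfl | hi1
    · exact hb1.le
    · exact hb i hi1 hin
  rw [one_div_mul_eq_div]
  exact sum_div_rpow_partialSum_le hp.le hp1 n hb_nonneg

theorem stmt_0 (n : ℕ) (hn : 1 ≤ n) (b : ℕ → ℝ) (p : ℝ)
    (hb1 : 0 < b 1) (hb : ∀ i, 2 ≤ i → i ≤ n → 0 ≤ b i)
    (hp : 0 < p) (hp1 : p < 1) :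
    ∑ i ∈ Icc 1 n, b i / (∑ j ∈ Icc 1 i, b j) ^ p
      ≤ (1 / (1 - p)) * (∑ i ∈ Icc 1 n, b i) ^ (1 - p) :=
  stmt_0_general n b p hb1 hb hp hp1
end

section
/- Let b be a positive real, b_0 > 0, and b_1, ..., b_n ∈ (0, b], and let p ∈ (0,1). Then ∑_{i=1}^n b_i / (b_0 + ∑_{j=1}^{i-1} b_j)^p ≤ b/b_0^p + (2/(1-p)) · (b_0 + ∑_{i=1}^n b_i)^{1-p}. -/
/-!
Write `S i = b₀ + b 1 + ⋯ + b i`. The `i`-th term is `(S i - S (i-1)) / S (i-1) ^ p`, which splits as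
`(S i - S (i-1)) / S i ^ p + (S i - S (i-1)) * (S (i-1) ^ (-p) - S i ^ (-p))`. The first part is at most
`(S i ^ (1-p) - S (i-1) ^ (1-p)) / (1-p)` by concavity of `t ↦ t ^ (1-p)`, the second at most
`B * (S (i-1) ^ (-p) - S i ^ (-p))`; both bounds telescope.
-/

open Finset

namespace Real

theorem sub_div_rpow_le_sub_rpow_one_sub_div {x y p : ℝ} (hx : 0 ≤ x) (hy : 0 < y) (hp₀ : 0 ≤ p)
    (hp₁ : p < 1) : (y - x) / y ^ p ≤ (y ^ (1 - p) - x ^ (1 - p)) / (1 - p) := by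
  have bernoulli : (x / y) ^ (1 - p) ≤ 1 + (1 - p) * (x / y - 1) := by
    simpa using rpow_one_add_le_one_add_mul_self (s := x / y - 1)
      (by linarith [div_nonneg hx hy.le]) (by linarith) (by linarith)
  have tangent : x ^ (1 - p) ≤ y ^ (1 - p) - (1 - p) * ((y - x) / y ^ p) :=
    calc x ^ (1 - p) = (x / y) ^ (1 - p) * y ^ (1 - p) := by
          rw [div_rpow hx hy.le, div_mul_cancel₀ _ (rpow_pos_of_pos hy _).ne']
      _ ≤ (1 + (1 - p) * (x / y - 1)) * y ^ (1 - p) := by gcongr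
      _ = y ^ (1 - p) - (1 - p) * ((y - x) / y ^ p) := by
          rw [rpow_sub hy, rpow_one]
          field_simp
          ring
  rw [le_div_iff₀ (by linarith)]
  linarith

theorem sub_div_rpow_le_of_sub_le {x y B p : ℝ} (hx : 0 < x) (hxy : x ≤ y) (hyx : y - x ≤ B)
    (hp₀ : 0 ≤ p) (hp₁ : p < 1) :
    (y - x) / x ^ p ≤ (B / x ^ p - B / y ^ p) + (y ^ (1 - p) - x ^ (1 - p)) / (1 - p) := by
  have hy : 0 < y := hx.trans_le hxy
  have hinv : 1 / y ^ p ≤ 1 / x ^ p :=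
    one_div_le_one_div_of_le (rpow_pos_of_pos hx p) (rpow_le_rpow hx.le hxy hp₀)
  calc (y - x) / x ^ p = (y - x) * (1 / x ^ p - 1 / y ^ p) + (y - x) / y ^ p := by ring
    _ ≤ B * (1 / x ^ p - 1 / y ^ p) + (y ^ (1 - p) - x ^ (1 - p)) / (1 - p) := by
        refine add_le_add (mul_le_mul_of_nonneg_right hyx (sub_nonneg.mpr hinv)) ?_
        exact sub_div_rpow_le_sub_rpow_one_sub_div hx.le hy hp₀ hp₁
    _ = (B / x ^ p - B / y ^ p) + (y ^ (1 - p) - x ^ (1 - p)) / (1 - p) := by ring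

theorem sum_range_sub_div_rpow_le {x : ℕ → ℝ} {B p : ℝ} {n : ℕ}
    (hx : ∀ i < n, 0 < x i ∧ x i ≤ x (i + 1) ∧ x (i + 1) - x i ≤ B) (hp₀ : 0 ≤ p) (hp₁ : p < 1) :
    ∑ i ∈ range n, (x (i + 1) - x i) / x i ^ p
      ≤ (B / x 0 ^ p - B / x n ^ p) + (x n ^ (1 - p) - x 0 ^ (1 - p)) / (1 - p) :=
  calc ∑ i ∈ range n, (x (i + 1) - x i) / x i ^ p
      ≤ ∑ i ∈ range n, ((B / x i ^ p - B / x (i + 1) ^ p)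
          + (x (i + 1) ^ (1 - p) - x i ^ (1 - p)) / (1 - p)) := by
        refine sum_le_sum fun i hi ↦ ?_
        obtain ⟨hpos, hle, hstep⟩ := hx i (mem_range.mp hi)
        exact sub_div_rpow_le_of_sub_le hpos hle hstep hp₀ hp₁
    _ = (B / x 0 ^ p - B / x n ^ p) + (x n ^ (1 - p) - x 0 ^ (1 - p)) / (1 - p) := by
        rw [sum_add_distrib, ← sum_div, sum_range_sub' (fun i ↦ B / x i ^ p),
          sum_range_sub (fun i ↦ x i ^ (1 - p))]

end Real

theorem sum_Icc_one_eq_sum_range {M : Type*} [AddCommMonoid M] (f : ℕ → M) (n : ℕ) :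
    ∑ i ∈ Icc 1 n, f i = ∑ i ∈ range n, f (i + 1) := by
  rw [range_eq_Ico, sum_Ico_add' f 0 n 1, zero_add, Ico_add_one_right_eq_Icc]

theorem sum_div_rpow_partial_sum_le {n : ℕ} {b : ℕ → ℝ} {b₀ B p : ℝ} (hb₀ : 0 < b₀)
    (hb : ∀ i, 1 ≤ i → i ≤ n → 0 < b i ∧ b i ≤ B) (hp₀ : 0 ≤ p) (hp₁ : p < 1) :
    ∑ i ∈ Icc 1 n, b i / (b₀ + ∑ j ∈ Icc 1 (i - 1), b j) ^ p
      ≤ (B / b₀ ^ p - B / (b₀ + ∑ i ∈ Icc 1 n, b i) ^ p)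
        + ((b₀ + ∑ i ∈ Icc 1 n, b i) ^ (1 - p) - b₀ ^ (1 - p)) / (1 - p) := by
  set x : ℕ → ℝ := fun i ↦ b₀ + ∑ j ∈ Icc 1 i, b j
  have hx_succ (i : ℕ) : x (i + 1) - x i = b (i + 1) := by
    simp only [x, sum_Icc_succ_top (Nat.le_add_left 1 i)]
    ring
  have hx : ∀ i < n, 0 < x i ∧ x i ≤ x (i + 1) ∧ x (i + 1) - x i ≤ B := fun i hi ↦ by
    have hsum : 0 ≤ ∑ j ∈ Icc 1 i, b j := sum_nonneg fun j hj ↦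
      (hb j (mem_Icc.mp hj).1 ((mem_Icc.mp hj).2.trans hi.le)).1.le
    have hbi := hb (i + 1) (Nat.le_add_left 1 i) hi
    exact ⟨by positivity, by linarith [hx_succ i], (hx_succ i).trans_le hbi.2⟩
  have hlhs : ∑ i ∈ Icc 1 n, b i / (b₀ + ∑ j ∈ Icc 1 (i - 1), b j) ^ p
      = ∑ i ∈ range n, (x (i + 1) - x i) / x i ^ p := by
    rw [sum_Icc_one_eq_sum_range]
    refine sum_congr rfl fun i _ ↦ ?_
    rw [hx_succ, Nat.add_sub_cancel]
  have hx₀ : x 0 = b₀ := by simp [x]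
  rw [hlhs]
  simpa only [hx₀] using Real.sum_range_sub_div_rpow_le hx hp₀ hp₁

theorem stmt_1 (n : ℕ) (b : ℕ → ℝ) (b₀ B p : ℝ)
    (hb₀ : 0 < b₀) (hB : 0 < B)
    (hb : ∀ i, 1 ≤ i → i ≤ n → 0 < b i ∧ b i ≤ B)
    (hp : 0 < p) (hp1 : p < 1) :
    ∑ i ∈ Icc 1 n, b i / (b₀ + ∑ j ∈ Icc 1 (i - 1), b j) ^ p
      ≤ B / b₀ ^ p + (2 / (1 - p)) * (b₀ + ∑ i ∈ Icc 1 n, b i) ^ (1 - p) := by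
  refine (sum_div_rpow_partial_sum_le hb₀ hb hp.le hp1).trans ?_
  set S := b₀ + ∑ i ∈ Icc 1 n, b i
  have hS : 0 < S := add_pos_of_pos_of_nonneg hb₀ <| sum_nonneg fun i hi ↦
    (hb i (mem_Icc.mp hi).1 (mem_Icc.mp hi).2).1.le
  have hBS : 0 ≤ B / S ^ p := by positivity
  have hpow : (S ^ (1 - p) - b₀ ^ (1 - p)) / (1 - p) ≤ 2 / (1 - p) * S ^ (1 - p) := by
    rw [div_mul_eq_mul_div]
    gcongr
    linarith [Real.rpow_nonneg hb₀.le (1 - p), Real.rpow_nonneg hS.le (1 - p)]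
  linarith
end

section
/- For any non-negative real numbers a_1, ..., a_n with a_i ≤ a_max for all i, one has ∑_{i=1}^n a_i / (1 + ∑_{j=1}^i a_j)^{4/3} ≤ 12. -/
open Finset

lemma key_ineq (u v : ℝ) (hu : 1 ≤ u) (huv : u ≤ v) :
    (v - u) / v ^ ((4:ℝ)/3) ≤ 3 / u ^ ((1:ℝ)/3) - 3 / v ^ ((1:ℝ)/3) := by
  have hu0 : (0:ℝ) < u := lt_of_lt_of_le one_pos hu
  have hv0 : (0:ℝ) < v := lt_of_lt_of_le hu0 huv
  set x := u ^ ((1:ℝ)/3) with hxdef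
  set y := v ^ ((1:ℝ)/3) with hydef
  have hx0 : 0 < x := Real.rpow_pos_of_pos hu0 _
  have hy0 : 0 < y := Real.rpow_pos_of_pos hv0 _
  have hxy : x ≤ y := Real.rpow_le_rpow hu0.le huv (by norm_num)
  have hx3 : x ^ (3:ℕ) = u := by
    rw [hxdef, ← Real.rpow_natCast (u ^ ((1:ℝ)/3)) 3, ← Real.rpow_mul hu0.le]
    norm_num
  have hy3 : y ^ (3:ℕ) = v := by
    rw [hydef, ← Real.rpow_natCast (v ^ ((1:ℝ)/3)) 3, ← Real.rpow_mul hv0.le]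
    norm_num
  have hy4 : y ^ (4:ℕ) = v ^ ((4:ℝ)/3) := by
    rw [hydef, ← Real.rpow_natCast (v ^ ((1:ℝ)/3)) 4, ← Real.rpow_mul hv0.le]
    norm_num
  have h1 : 3 / x - 3 / y = (3*y - 3*x) / (x*y) := by
    field_simp
  rw [← hy4, ← hy3, ← hx3, h1, div_le_div_iff₀ (by positivity) (by positivity)]
  nlinarith [mul_pos hx0 hy0, sq_nonneg (y - x), sq_nonneg y, sq_nonneg x,
    mul_nonneg (mul_nonneg (sub_nonneg.2 hxy) hy0.le) (sq_nonneg (y - x)),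
    mul_nonneg (mul_nonneg (sub_nonneg.2 hxy) (mul_pos hx0 hy0).le) (sq_nonneg y),
    mul_nonneg (mul_nonneg (sub_nonneg.2 hxy) hy0.le) (mul_nonneg hy0.le (sub_nonneg.2 hxy))]

lemma main_ind (a : ℕ → ℝ) : ∀ n : ℕ, (∀ i, 1 ≤ i → i ≤ n → 0 ≤ a i) →
    ∑ i ∈ Icc 1 n, a i / (1 + ∑ j ∈ Icc 1 i, a j) ^ ((4:ℝ)/3)
      ≤ 3 - 3 / (1 + ∑ j ∈ Icc 1 n, a j) ^ ((1:ℝ)/3) := by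
  intro n
  induction n with
  | zero => simp
  | succ n ih =>
    intro h
    have hS : 0 ≤ ∑ j ∈ Icc 1 n, a j :=
      Finset.sum_nonneg fun j hj => h j (mem_Icc.1 hj).1 ((mem_Icc.1 hj).2.trans (Nat.le_succ n))
    have han : 0 ≤ a (n+1) := h (n+1) (Nat.le_add_left 1 n) le_rfl
    have hins : Icc 1 (n+1) = insert (n+1) (Icc 1 n) :=
      (Finset.insert_Icc_right_eq_Icc_add_one (Nat.le_add_left 1 n)).symm
    rw [hins, Finset.sum_insert (by simp), hins, Finset.sum_insert (by simp)]
    have hih := ih (fun i h1 h2 => h i h1 (h2.trans (Nat.le_succ n)))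
    have hkey := key_ineq (1 + ∑ j ∈ Icc 1 n, a j) (a (n+1) + (1 + ∑ j ∈ Icc 1 n, a j))
      (by linarith) (by linarith)
    have : a (n+1) + (1 + ∑ j ∈ Icc 1 n, a j) - (1 + ∑ j ∈ Icc 1 n, a j) = a (n+1) := by ring
    rw [this] at hkey
    have heq : 1 + (a (n+1) + ∑ j ∈ Icc 1 n, a j) = a (n+1) + (1 + ∑ j ∈ Icc 1 n, a j) := by ring
    rw [heq]
    linarith

theorem stmt_2 (n : ℕ) (a : ℕ → ℝ) (amax : ℝ) (hamax : 0 ≤ amax)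
    (ha : ∀ i, 1 ≤ i → i ≤ n → 0 ≤ a i ∧ a i ≤ amax) :
    ∑ i ∈ Icc 1 n, a i / (1 + ∑ j ∈ Icc 1 i, a j) ^ ((4:ℝ)/3) ≤ 12 := by
  have h := main_ind a n (fun i h1 h2 => (ha i h1 h2).1)
  have hS : 0 ≤ ∑ j ∈ Icc 1 n, a j :=
    Finset.sum_nonneg fun j hj => (ha j (mem_Icc.1 hj).1 (mem_Icc.1 hj).2).1
  have : (0:ℝ) ≤ 3 / (1 + ∑ j ∈ Icc 1 n, a j) ^ ((1:ℝ)/3) := by positivity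
  linarith
end

section
/- For any non-negative real numbers a_1, ..., a_n with a_i ≤ a_max for all i, one has ∑_{i=1}^n a_i / (1 + ∑_{j=1}^{i-1} a_j)^{4/3} ≤ 12 + 2·a_max. -/
open Finset

private lemma key_poly (C v w : ℝ) (hv : 1 ≤ v) (hw : v ≤ w)
    (hC : 6 + 2 * (w ^ 3 - v ^ 3) ≤ C) :
    (w ^ 3 - v ^ 3) * (v * w) ≤ C * (w - v) * v ^ 4 := by
  have hd : 0 ≤ w - v := by linarith
  have hv1 : 0 ≤ v - 1 := by linarith
  have hQ : (0:ℝ) ≤ w^2 + w*v + v^2 := by nlinarith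
  have h2 : (w^2 + w*v + v^2) * (v*w) ≤ 6*v^4 + 2*(w^2 + w*v + v^2)*(w-v)*v^4 := by
    nlinarith [mul_nonneg hd hv1, mul_nonneg (mul_nonneg hd hd) hv1,
      mul_nonneg (mul_nonneg hd hv1) hv1, sq_nonneg v, sq_nonneg (w-v),
      mul_nonneg hd (mul_nonneg hv1 hQ), mul_nonneg (mul_nonneg hd hQ) hv1,
      mul_nonneg (mul_nonneg hd hd) hQ, mul_nonneg hd hQ,
      mul_nonneg (mul_nonneg (mul_nonneg hd hQ) hv1) hv1,
      mul_nonneg (mul_nonneg hd hQ) (mul_nonneg hv1 hv1)]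
  have h3 : (w ^ 3 - v ^ 3) * (v * w) ≤ (6 + 2*(w^3 - v^3)) * (w - v) * v ^ 4 := by
    have := mul_le_mul_of_nonneg_left h2 hd
    nlinarith [this]
  have h4 : 0 ≤ (w - v) * v ^ 4 := by positivity
  nlinarith [mul_le_mul_of_nonneg_right hC h4]

private lemma step (amax b t : ℝ) (ht : 1 ≤ t) (hb0 : 0 ≤ b) (hb1 : b ≤ amax) :
    b / t ^ ((4:ℝ)/3) ≤ (6 + 2*amax) / t ^ ((1:ℝ)/3)
      - (6 + 2*amax) / (t + b) ^ ((1:ℝ)/3) := by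
  have ht0 : (0:ℝ) ≤ t := by linarith
  have htb0 : (0:ℝ) ≤ t + b := by linarith
  set v := t ^ ((1:ℝ)/3) with hvdef
  set w := (t + b) ^ ((1:ℝ)/3) with hwdef
  have hv1 : 1 ≤ v := Real.one_le_rpow ht (by norm_num)
  have hvw : v ≤ w := Real.rpow_le_rpow ht0 (by linarith) (by norm_num)
  have hv3 : v ^ 3 = t := by
    rw [hvdef, ← Real.rpow_natCast (t ^ ((1:ℝ)/3)) 3, ← Real.rpow_mul ht0]
    norm_num
  have hw3 : w ^ 3 = t + b := by
    rw [hwdef, ← Real.rpow_natCast ((t+b) ^ ((1:ℝ)/3)) 3, ← Real.rpow_mul htb0]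
    norm_num
  have hv4 : v ^ 4 = t ^ ((4:ℝ)/3) := by
    rw [hvdef, ← Real.rpow_natCast (t ^ ((1:ℝ)/3)) 4, ← Real.rpow_mul ht0]
    norm_num
  have hvpos : 0 < v := lt_of_lt_of_le one_pos hv1
  have hwpos : 0 < w := lt_of_lt_of_le hvpos hvw
  have hb' : b = w ^ 3 - v ^ 3 := by rw [hv3, hw3]; ring
  have hkey : (w ^ 3 - v ^ 3) * (v * w) ≤ (6 + 2*amax) * (w - v) * v ^ 4 := by
    apply key_poly _ _ _ hv1 hvw
    rw [← hb']; linarith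
  have hrhs : (6 + 2*amax) / v - (6 + 2*amax) / w = (6 + 2*amax) * (w - v) / (v * w) := by
    field_simp
  rw [← hv4, hrhs]
  rw [div_le_div_iff₀ (by positivity) (by positivity)]
  calc b * (v * w) = (w ^ 3 - v ^ 3) * (v * w) := by rw [← hb']
    _ ≤ (6 + 2*amax) * (w - v) * v ^ 4 := hkey

private lemma aux_sum (a : ℕ → ℝ) (amax : ℝ) (hamax : 0 ≤ amax) :
    ∀ n : ℕ, (∀ i, 1 ≤ i → i ≤ n → 0 ≤ a i ∧ a i ≤ amax) →
    ∑ i ∈ Icc 1 n, a i / (1 + ∑ j ∈ Icc 1 (i - 1), a j) ^ ((4:ℝ)/3)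
      ≤ 12 + 2 * amax - (6 + 2*amax) / (1 + ∑ j ∈ Icc 1 n, a j) ^ ((1:ℝ)/3) := by
  intro n
  induction n with
  | zero =>
    intro _
    simp [Real.one_rpow]
    linarith
  | succ n ih =>
    intro ha
    have ha' : ∀ i, 1 ≤ i → i ≤ n → 0 ≤ a i ∧ a i ≤ amax := fun i h1 h2 =>
      ha i h1 (by omega)
    have hS : 0 ≤ ∑ j ∈ Icc 1 n, a j :=
      Finset.sum_nonneg fun j hj => (ha' j (Finset.mem_Icc.1 hj).1 (Finset.mem_Icc.1 hj).2).1
    have ht : 1 ≤ 1 + ∑ j ∈ Icc 1 n, a j := by linarith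
    have han := ha (n+1) (by omega) le_rfl
    have hstep := step amax (a (n+1)) (1 + ∑ j ∈ Icc 1 n, a j) ht han.1 han.2
    rw [Finset.sum_Icc_succ_top (by omega : 1 ≤ n + 1)]
    rw [Finset.sum_Icc_succ_top (by omega : 1 ≤ n + 1)]
    have hsub : n + 1 - 1 = n := by omega
    rw [hsub]
    have hIH := ih ha'
    have harr : 1 + (∑ j ∈ Icc 1 n, a j + a (n+1))
        = (1 + ∑ j ∈ Icc 1 n, a j) + a (n+1) := by ring
    rw [harr]
    linarith

theorem stmt_3 (n : ℕ) (a : ℕ → ℝ) (amax : ℝ) (hamax : 0 ≤ amax)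
    (ha : ∀ i, 1 ≤ i → i ≤ n → 0 ≤ a i ∧ a i ≤ amax) :
    ∑ i ∈ Icc 1 n, a i / (1 + ∑ j ∈ Icc 1 (i - 1), a j) ^ ((4:ℝ)/3)
      ≤ 12 + 2 * amax := by
  have h := aux_sum a amax hamax n ha
  have hS : 0 ≤ ∑ j ∈ Icc 1 n, a j :=
    Finset.sum_nonneg fun j hj => (ha j (Finset.mem_Icc.1 hj).1 (Finset.mem_Icc.1 hj).2).1
  have hpos : 0 < (1 + ∑ j ∈ Icc 1 n, a j) ^ ((1:ℝ)/3) := by positivity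
  have : 0 ≤ (6 + 2*amax) / (1 + ∑ j ∈ Icc 1 n, a j) ^ ((1:ℝ)/3) := by positivity
  linarith
end

section
/- Suppose x ≥ 0 satisfies x ≤ B·(1+x)^{2/9}·x^{1/3} + L·x^{2/3} for nonnegative constants B, L. Then x ≤ C·(1 + L^3 + B^{9/4}) for some absolute constant C. -/
/-!
For `x ≤ 1` there is nothing to prove. For `x ≥ 1` we have `(1 + x)^{2/9} ≤ 2 x^{2/9}`, so
`x ≤ 2B x^{5/9} + L x^{2/3}` and one of the two terms is at least `x / 2`. Since both exponents are
below one, `x ≤ c x^p` forces `x ≤ c^{1/(1-p)}`, giving `x ≤ (4B)^{9/4}` or `x ≤ (2L)^3`.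
-/

open Real

lemma le_rpow_inv_of_le_mul_rpow {x c p : ℝ} (hx : 0 ≤ x) (hc : 0 ≤ c) (hp : p < 1)
    (h : x ≤ c * x ^ p) : x ≤ c ^ (1 - p)⁻¹ := by
  rcases hx.eq_or_lt with rfl | hx
  · exact rpow_nonneg hc _
  have hsub : x ^ (1 - p) ≤ c := by
    rw [rpow_sub hx, rpow_one, div_le_iff₀ (rpow_pos_of_pos hx p)]
    exact h
  calc x = (x ^ (1 - p)) ^ (1 - p)⁻¹ := (rpow_rpow_inv hx.le (by linarith)).symm
    _ ≤ c ^ (1 - p)⁻¹ :=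
      rpow_le_rpow (rpow_nonneg hx.le _) hsub (inv_nonneg.mpr (by linarith))

lemma one_add_rpow_le_two_mul_rpow {x p : ℝ} (hx : 1 ≤ x) (hp₀ : 0 ≤ p) (hp₁ : p ≤ 1) :
    (1 + x) ^ p ≤ 2 * x ^ p :=
  calc (1 + x) ^ p ≤ (2 * x) ^ p := rpow_le_rpow (by linarith) (by linarith) hp₀
    _ = 2 ^ p * x ^ p := mul_rpow zero_le_two (by linarith)
    _ ≤ 2 * x ^ p := by
      gcongr
      simpa using rpow_le_rpow_of_exponent_le one_le_two hp₁

lemma four_rpow_nine_div_four_le : (4 : ℝ) ^ ((9 : ℝ) / 4) ≤ 23 := by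
  refine le_of_pow_le_pow_left₀ four_ne_zero (by norm_num) ?_
  rw [← rpow_natCast, ← rpow_mul zero_le_four]
  norm_num

theorem stmt_7 : ∃ C : ℝ, 0 < C ∧ ∀ x B L : ℝ, 0 ≤ x → 0 ≤ B → 0 ≤ L →
    x ≤ B * (1 + x) ^ ((2:ℝ)/9) * x ^ ((1:ℝ)/3) + L * x ^ ((2:ℝ)/3) →
    x ≤ C * (1 + L ^ 3 + B ^ ((9:ℝ)/4)) := by
  refine ⟨23, by norm_num, fun x B L hx hB hL h => ?_⟩
  have hB' : 0 ≤ B ^ ((9:ℝ)/4) := rpow_nonneg hB _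
  have hL' : 0 ≤ L ^ 3 := pow_nonneg hL 3
  rcases le_or_gt x 1 with hx1 | hx1
  · linarith
  have hsplit : x ≤ 2 * B * x ^ ((5:ℝ)/9) + L * x ^ ((2:ℝ)/3) := by
    have h59 : x ^ ((2:ℝ)/9) * x ^ ((1:ℝ)/3) = x ^ ((5:ℝ)/9) := by
      rw [← rpow_add (by linarith)]; norm_num
    calc x ≤ B * (1 + x) ^ ((2:ℝ)/9) * x ^ ((1:ℝ)/3) + L * x ^ ((2:ℝ)/3) := h
      _ ≤ B * (2 * x ^ ((2:ℝ)/9)) * x ^ ((1:ℝ)/3) + L * x ^ ((2:ℝ)/3) := by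
        gcongr; exact one_add_rpow_le_two_mul_rpow hx1.le (by norm_num) (by norm_num)
      _ = 2 * B * x ^ ((5:ℝ)/9) + L * x ^ ((2:ℝ)/3) := by rw [← h59]; ring
  rcases le_or_gt (x / 2) (2 * B * x ^ ((5:ℝ)/9)) with hBdom | hLdom
  · have hxB := le_rpow_inv_of_le_mul_rpow hx (by positivity : 0 ≤ 4 * B)
      (by norm_num : (5:ℝ)/9 < 1) (by linarith)
    rw [mul_rpow zero_le_four hB] at hxB
    norm_num at hxB
    nlinarith [four_rpow_nine_div_four_le]
  · have hxL := le_rpow_inv_of_le_mul_rpow hx (by positivity : 0 ≤ 2 * L)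
      (by norm_num : (2:ℝ)/3 < 1) (by linarith)
    norm_num at hxL
    nlinarith
end

section
/- Suppose x ≥ 0 satisfies x ≤ 6L·(3x)^{2/3} + 80·B^{3/2}·(1 + σ²T + x)^{1/3} for nonnegative constants L, B, σ and positive integer T. Then x ≤ C·(1 + L³ + B^{9/4} + B^{3/2}·σ^{2/3}·T^{1/3}) for some absolute constant C. -/
/-!
Put `u = x^(1/3)`, `β = B^(3/4)` and `s = (σ²T)^(1/3)`. Since `3^(2/3) ≤ 3` and the cube root is
subadditive, the hypothesis becomes the polynomial inequality `u³ ≤ 18 L u² + 80 β² (1 + s + u)`.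
Unless `u ≤ 72 L` or `u ≤ 18 β`, the terms `18 L u²` and `80 β² u` are each at most `u³ / 4`,
which leaves `u³ ≤ 160 β² (1 + s)`; together with `β² ≤ 1 + β³` this gives
`x = u³ ≤ 72³ (1 + L³ + β³ + β² s)`.
-/

open Real

lemma rpow_add_add_le_add_add_rpow {p a b c : ℝ} (ha : 0 ≤ a) (hb : 0 ≤ b) (hc : 0 ≤ c)
    (hp : 0 ≤ p) (hp1 : p ≤ 1) : (a + b + c) ^ p ≤ a ^ p + b ^ p + c ^ p :=
  (rpow_add_le_add_rpow (by positivity) hc hp hp1).trans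
    (add_le_add_left (rpow_add_le_add_rpow ha hb hp hp1) _)

lemma rpow_two_thirds_three_mul_le {x : ℝ} (hx : 0 ≤ x) :
    (3 * x) ^ ((2:ℝ)/3) ≤ 3 * (x ^ ((1:ℝ)/3)) ^ 2 := by
  rw [mul_rpow (by norm_num) hx, ← rpow_mul_natCast hx]
  norm_num
  gcongr
  exact rpow_le_self_of_one_le (by norm_num) (by norm_num)

lemma rpow_one_third_one_add_mul_add_le {σ t x : ℝ} (hσ : 0 ≤ σ) (ht : 0 ≤ t) (hx : 0 ≤ x) :
    (1 + σ ^ 2 * t + x) ^ ((1:ℝ)/3)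
      ≤ 1 + σ ^ ((2:ℝ)/3) * t ^ ((1:ℝ)/3) + x ^ ((1:ℝ)/3) := by
  have hσt : (σ ^ 2 * t) ^ ((1:ℝ)/3) = σ ^ ((2:ℝ)/3) * t ^ ((1:ℝ)/3) := by
    rw [mul_rpow (by positivity) ht, ← rpow_natCast, ← rpow_mul hσ]
    norm_num
  calc (1 + σ ^ 2 * t + x) ^ ((1:ℝ)/3)
      ≤ 1 ^ ((1:ℝ)/3) + (σ ^ 2 * t) ^ ((1:ℝ)/3) + x ^ ((1:ℝ)/3) :=
        rpow_add_add_le_add_add_rpow zero_le_one (by positivity) hx (by norm_num) (by norm_num)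
    _ = 1 + σ ^ ((2:ℝ)/3) * t ^ ((1:ℝ)/3) + x ^ ((1:ℝ)/3) := by rw [one_rpow, hσt]

lemma pow_three_le_of_pow_three_le_cubic {u L β s : ℝ} (hu : 0 ≤ u) (hL : 0 ≤ L)
    (hβ : 0 ≤ β) (hs : 0 ≤ s) (h : u ^ 3 ≤ 18 * L * u ^ 2 + 80 * β ^ 2 * (1 + s + u)) :
    u ^ 3 ≤ 72 ^ 3 * (1 + L ^ 3 + β ^ 3 + β ^ 2 * s) := by
  have hβ2 : β ^ 2 ≤ 1 + β ^ 3 := by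
    nlinarith [sq_nonneg (β - 1), mul_nonneg hβ (sq_nonneg (β - 1))]
  have : 0 ≤ β ^ 2 * s := by positivity
  have : 0 ≤ L ^ 3 := by positivity
  have : 0 ≤ β ^ 3 := by positivity
  rcases le_or_gt u (72 * L) with hu_le | hLu
  · nlinarith [pow_le_pow_left₀ hu hu_le 3]
  rcases le_or_gt u (18 * β) with hu_le | hβu
  · nlinarith [pow_le_pow_left₀ hu hu_le 3]
  have hLu : 18 * L * u ^ 2 ≤ u ^ 3 / 4 := by nlinarith [sq_nonneg u]
  have hβu : 80 * β ^ 2 * u ≤ u ^ 3 / 4 := by nlinarith [mul_nonneg hu hβ]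
  nlinarith

theorem stmt_8 : ∃ C : ℝ, 0 < C ∧ ∀ (x L B σ : ℝ) (T : ℕ),
    0 ≤ x → 0 ≤ L → 0 ≤ B → 0 ≤ σ → 0 < T →
    x ≤ 6 * L * (3 * x) ^ ((2:ℝ)/3)
        + 80 * B ^ ((3:ℝ)/2) * (1 + σ ^ 2 * T + x) ^ ((1:ℝ)/3) →
    x ≤ C * (1 + L ^ 3 + B ^ ((9:ℝ)/4)
        + B ^ ((3:ℝ)/2) * σ ^ ((2:ℝ)/3) * (T:ℝ) ^ ((1:ℝ)/3)) := by
  refine ⟨72 ^ 3, by norm_num, fun x L B σ T hx hL hB hσ _ h => ?_⟩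
  set u := x ^ ((1:ℝ)/3)
  set β := B ^ ((3:ℝ)/4)
  set s := σ ^ ((2:ℝ)/3) * (T:ℝ) ^ ((1:ℝ)/3)
  have hx_eq : x = u ^ 3 := by
    rw [← rpow_mul_natCast hx]; norm_num
  have hB32 : B ^ ((3:ℝ)/2) = β ^ 2 := by
    rw [← rpow_mul_natCast hB]; norm_num
  have hB94 : B ^ ((9:ℝ)/4) = β ^ 3 := by
    rw [← rpow_mul_natCast hB]; norm_num
  have h_cubic : u ^ 3 ≤ 18 * L * u ^ 2 + 80 * β ^ 2 * (1 + s + u) := by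
    calc u ^ 3 = x := hx_eq.symm
      _ ≤ 6 * L * (3 * x) ^ ((2:ℝ)/3) + 80 * β ^ 2 * (1 + σ ^ 2 * T + x) ^ ((1:ℝ)/3) := by
        rwa [← hB32]
      _ ≤ 6 * L * (3 * u ^ 2) + 80 * β ^ 2 * (1 + s + u) := by
        gcongr
        · exact rpow_two_thirds_three_mul_le hx
        · exact rpow_one_third_one_add_mul_add_le hσ (Nat.cast_nonneg T) hx
      _ = 18 * L * u ^ 2 + 80 * β ^ 2 * (1 + s + u) := by ring
  rw [hB32, hB94, hx_eq]
  have := pow_three_le_of_pow_three_le_cubic (by positivity) hL (by positivity) (by positivity)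
    h_cubic
  linarith
end

section
/- Let f : ℝ^d → ℝ be L-smooth with bounded suboptimality gap: 0 ≤ f(x) − f* ≤ B for all x, where f* = inf f. Let x_{t+1} = x_t − η_t d_t with η_t > 0 non-increasing, and write ḡ_t = ∇f(x_t), ε_t = d_t − ḡ_t. Then ∑_{t=1}^T ‖ḡ_t‖² ≤ ∑_{t=1}^T ‖ε_t‖² + 2B/η_T + L·∑_{t=1}^T η_t ‖d_t‖². -/
open Finset

section aux

variable {F : Type*} [NormedAddCommGroup F] [InnerProductSpace ℝ F] [CompleteSpace F]

lemma my_descent (f : F → ℝ) (L : ℝ) (hL : 0 ≤ L) (hdiff : Differentiable ℝ f)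
    (hlip : ∀ x y, ‖gradient f x - gradient f y‖ ≤ L * ‖x - y‖)
    (x v : F) :
    f (x + v) ≤ f x + inner ℝ (gradient f x) v + L / 2 * ‖v‖ ^ 2 := by
  set φ : ℝ → ℝ := fun t =>
    f (x + t • v) - t * inner ℝ (gradient f x) v - L / 2 * t ^ 2 * ‖v‖ ^ 2 with hφ
  have hφd : ∀ t : ℝ, HasDerivAt φ
      ((inner ℝ (gradient f (x + t • v)) v : ℝ) - inner ℝ (gradient f x) v - L * t * ‖v‖ ^ 2) t := by
    intro t
    have h1 : HasDerivAt (fun t : ℝ => x + t • v) v t := by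
      simpa using ((hasDerivAt_id t).smul_const v).const_add x
    have h2 : HasDerivAt (fun t : ℝ => f (x + t • v))
        ((inner ℝ (gradient f (x + t • v)) v : ℝ)) t := by
      have hg := (hdiff (x + t • v)).hasGradientAt
      have := hg.hasFDerivAt.comp_hasDerivAt t h1
      exact this.congr_deriv (by simp)
    have h3 : HasDerivAt (fun t : ℝ => t * (inner ℝ (gradient f x) v : ℝ))
        (inner ℝ (gradient f x) v) t := by
      simpa using (hasDerivAt_id t).mul_const (inner ℝ (gradient f x) v : ℝ)
    have h4 : HasDerivAt (fun t : ℝ => L / 2 * t ^ 2 * ‖v‖ ^ 2)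
        (L * t * ‖v‖ ^ 2) t := by
      have := ((hasDerivAt_pow 2 t).const_mul (L / 2)).mul_const (‖v‖ ^ 2)
      refine this.congr_deriv ?_
      push_cast
      ring
    exact (h2.sub h3).sub h4
  have hanti : AntitoneOn φ (Set.Icc (0:ℝ) 1) := by
    apply antitoneOn_of_deriv_nonpos (convex_Icc 0 1)
    · exact fun t _ => (hφd t).continuousAt.continuousWithinAt
    · intro t _
      exact (hφd t).differentiableAt.differentiableWithinAt
    · intro t ht
      rw [interior_Icc] at ht
      rw [(hφd t).deriv]
      have h5 : (inner ℝ (gradient f (x + t • v)) v : ℝ) - inner ℝ (gradient f x) v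
          ≤ L * t * ‖v‖ ^ 2 := by
        have := real_inner_le_norm (gradient f (x + t • v) - gradient f x) v
        have hlip' := hlip (x + t • v) x
        have hnorm : ‖x + t • v - x‖ = t * ‖v‖ := by
          rw [add_sub_cancel_left, norm_smul, Real.norm_eq_abs, abs_of_pos ht.1]
        rw [hnorm] at hlip'
        have hvn : (0:ℝ) ≤ ‖v‖ := norm_nonneg v
        have := inner_sub_left (𝕜 := ℝ) (gradient f (x + t • v)) (gradient f x) v
        nlinarith [real_inner_le_norm (gradient f (x + t • v) - gradient f x) v,
          norm_nonneg (gradient f (x + t • v) - gradient f x)]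
      linarith
  have h01 := hanti (Set.mem_Icc.2 ⟨le_refl 0, zero_le_one⟩)
    (Set.mem_Icc.2 ⟨zero_le_one, le_refl 1⟩) zero_le_one
  simp only [hφ, one_smul, zero_smul, add_zero, one_pow, zero_pow, one_mul, mul_zero,
    zero_mul, sub_zero] at h01
  linarith

lemma my_abel (T : ℕ) (hT : 1 ≤ T) (B : ℝ) (Δ η : ℕ → ℝ)
    (hη : ∀ t, 1 ≤ t → t ≤ T → 0 < η t)
    (hmono : ∀ t, 1 ≤ t → t < T → η (t + 1) ≤ η t)
    (hΔ0 : ∀ t, 0 ≤ Δ t) (hΔB : ∀ t, Δ t ≤ B) :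
    ∑ t ∈ Icc 1 T, (Δ t - Δ (t + 1)) / η t ≤ B / η T := by
  have key : ∀ m, 1 ≤ m → m ≤ T →
      ∑ t ∈ Icc 1 m, (Δ t - Δ (t + 1)) / η t ≤ B / η m - Δ (m + 1) / η m := by
    intro m hm
    induction m, hm using Nat.le_induction with
    | base =>
      intro h1T
      simp only [Icc_self, sum_singleton]
      have h1 := hη 1 le_rfl h1T
      rw [div_sub_div_same, div_le_div_iff₀ h1 h1]
      nlinarith [hΔB 1]
    | succ m hm ih =>
      intro hmT
      have hmT' : m ≤ T := le_trans (Nat.le_succ m) hmT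
      have hmlt : m < T := lt_of_lt_of_le (Nat.lt_succ_self m) hmT
      have ihm := ih hmT'
      rw [Finset.sum_Icc_succ_top (by omega : 1 ≤ m + 1)]
      have hηm := hη m hm hmT'
      have hηm1 := hη (m + 1) (by omega) hmT
      have hmono' := hmono m hm hmlt
      have h1 : Δ (m + 1) / η (m + 1) - Δ (m + 1) / η m
          ≤ B / η (m + 1) - B / η m := by
        rw [div_sub_div _ _ (ne_of_gt hηm1) (ne_of_gt hηm),
          div_sub_div _ _ (ne_of_gt hηm1) (ne_of_gt hηm)]
        apply div_le_div_of_nonneg_right _ (by positivity)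
        nlinarith [hΔ0 (m + 1), hΔB (m + 1)]
      have h2 : (Δ (m + 1) - Δ (m + 2)) / η (m + 1)
          = Δ (m + 1) / η (m + 1) - Δ (m + 2) / η (m + 1) := by
        rw [div_sub_div_same]
      linarith
  have := key T hT le_rfl
  have hηT := hη T hT le_rfl
  have : B / η T - Δ (T + 1) / η T ≤ B / η T := by
    have : 0 ≤ Δ (T + 1) / η T := div_nonneg (hΔ0 _) (le_of_lt hηT)
    linarith
  linarith [key T hT le_rfl]

end aux

theorem stmt_13 (n T : ℕ) (hT : 1 ≤ T)
    (f : EuclideanSpace ℝ (Fin n) → ℝ) (L B fstar : ℝ) (hL : 0 ≤ L)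
    (hdiff : Differentiable ℝ f)
    (hlip : ∀ x y, ‖gradient f x - gradient f y‖ ≤ L * ‖x - y‖)
    (hglb : IsGLB (Set.range f) fstar)
    (hB : ∀ x, f x - fstar ≤ B)
    (x d : ℕ → EuclideanSpace ℝ (Fin n)) (η : ℕ → ℝ)
    (hη : ∀ t, 1 ≤ t → t ≤ T → 0 < η t)
    (hmono : ∀ t, 1 ≤ t → t < T → η (t + 1) ≤ η t)
    (hx : ∀ t, 1 ≤ t → t ≤ T → x (t + 1) = x t - η t • d t) :
    ∑ t ∈ Icc 1 T, ‖gradient f (x t)‖ ^ 2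
      ≤ ∑ t ∈ Icc 1 T, ‖d t - gradient f (x t)‖ ^ 2 + 2 * B / η T
        + L * ∑ t ∈ Icc 1 T, η t * ‖d t‖ ^ 2 := by
  set Δ : ℕ → ℝ := fun t => f (x t) - fstar with hΔ
  have hΔ0 : ∀ t, 0 ≤ Δ t := fun t =>
    sub_nonneg.2 (hglb.1 (Set.mem_range_self (x t)))
  have hΔB : ∀ t, Δ t ≤ B := fun t => hB (x t)
  -- per-step inequality
  have step : ∀ t, 1 ≤ t → t ≤ T →
      ‖gradient f (x t)‖ ^ 2 ≤ ‖d t - gradient f (x t)‖ ^ 2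
        + 2 * ((Δ t - Δ (t + 1)) / η t) + L * (η t * ‖d t‖ ^ 2) := by
    intro t h1 h2
    have hηt := hη t h1 h2
    have hdesc := my_descent f L hL hdiff hlip (x t) (-(η t • d t))
    rw [← sub_eq_add_neg, ← hx t h1 h2] at hdesc
    have hinner : (inner ℝ (gradient f (x t)) (-(η t • d t)) : ℝ)
        = -(η t * inner ℝ (gradient f (x t)) (d t)) := by
      rw [inner_neg_right, real_inner_smul_right]
    have hnorm : ‖-(η t • d t)‖ ^ 2 = η t ^ 2 * ‖d t‖ ^ 2 := by
      rw [norm_neg, norm_smul, Real.norm_eq_abs, mul_pow, sq_abs]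
    rw [hinner, hnorm] at hdesc
    -- inner(g,d) ≤ (Δ t - Δ (t+1))/η t + L/2 * η t * ‖d t‖^2
    have hfd : Δ t - Δ (t + 1) = f (x t) - f (x (t + 1)) := by
      simp only [hΔ]; ring
    have hgd : (inner ℝ (gradient f (x t)) (d t) : ℝ)
        ≤ (Δ t - Δ (t + 1)) / η t + L / 2 * η t * ‖d t‖ ^ 2 := by
      rw [hfd, div_add' _ _ _ (ne_of_gt hηt), le_div_iff₀ hηt]
      nlinarith [hdesc]
    have hexp : ‖d t - gradient f (x t)‖ ^ 2
        = ‖d t‖ ^ 2 - 2 * inner ℝ (d t) (gradient f (x t)) + ‖gradient f (x t)‖ ^ 2 := by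
      rw [norm_sub_sq_real]
    have hsym : (inner ℝ (d t) (gradient f (x t)) : ℝ)
        = inner ℝ (gradient f (x t)) (d t) := real_inner_comm _ _
    have hd2 : (0:ℝ) ≤ ‖d t‖ ^ 2 := by positivity
    nlinarith [hgd, mul_le_mul_of_nonneg_left hgd (le_of_lt (mul_pos two_pos hηt))]
  have hsum : ∑ t ∈ Icc 1 T, ‖gradient f (x t)‖ ^ 2
      ≤ ∑ t ∈ Icc 1 T, (‖d t - gradient f (x t)‖ ^ 2
          + 2 * ((Δ t - Δ (t + 1)) / η t) + L * (η t * ‖d t‖ ^ 2)) := by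
    apply Finset.sum_le_sum
    intro t ht
    rw [mem_Icc] at ht
    exact step t ht.1 ht.2
  have habel := my_abel T hT B Δ η hη hmono hΔ0 hΔB
  calc ∑ t ∈ Icc 1 T, ‖gradient f (x t)‖ ^ 2
      ≤ ∑ t ∈ Icc 1 T, (‖d t - gradient f (x t)‖ ^ 2
          + 2 * ((Δ t - Δ (t + 1)) / η t) + L * (η t * ‖d t‖ ^ 2)) := hsum
    _ = ∑ t ∈ Icc 1 T, ‖d t - gradient f (x t)‖ ^ 2
          + 2 * ∑ t ∈ Icc 1 T, (Δ t - Δ (t + 1)) / η t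
          + L * ∑ t ∈ Icc 1 T, η t * ‖d t‖ ^ 2 := by
        rw [Finset.sum_add_distrib, Finset.sum_add_distrib, Finset.mul_sum, Finset.mul_sum]
    _ ≤ ∑ t ∈ Icc 1 T, ‖d t - gradient f (x t)‖ ^ 2 + 2 * B / η T
          + L * ∑ t ∈ Icc 1 T, η t * ‖d t‖ ^ 2 := by
        have : 2 * ∑ t ∈ Icc 1 T, (Δ t - Δ (t + 1)) / η t ≤ 2 * B / η T := by
          rw [mul_div_assoc]
          linarith [habel]
        linarith
end

section
/- Let (ε_t)_{t≥0} be nonnegative reals with ε_0 = 0, and a_t ∈ (0,1] satisfying the recursion ε_t ≤ (1−a_t)ε_{t−1} + r_t with r_t ≥ 0. Then ∑_{t=1}^T ε_{t−1} ≤ ∑_{t=1}^{T−1}(1/a_{t+1} − 1/a_t)·ε_t − ε_T/a_T + ∑_{t=1}^T r_t/a_t, provided a_t is non-increasing. -/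
open Finset

/-- Summation by parts; `ε 0 = 0` kills the boundary term at `0` and also makes the identity
hold for `T = 0`, where `T - 1` truncates to `0`. -/
theorem sum_Icc_sub_div_eq_of_eq_zero {K : Type*} [Field K] (ε a : ℕ → K) (hε0 : ε 0 = 0)
    (T : ℕ) :
    ∑ t ∈ Icc 1 T, (ε (t - 1) - ε t) / a t
      = ∑ t ∈ Icc 1 (T - 1), (1 / a (t + 1) - 1 / a t) * ε t - ε T / a T := by
  cases T with
  | zero => simp [hε0]
  | succ n =>
    induction n with
    | zero => simp [hε0, neg_div]
    | succ n ih =>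
      rw [sum_Icc_succ_top (by omega), ih, Nat.add_sub_cancel, Nat.add_sub_cancel,
        sum_Icc_succ_top (by omega)]
      ring

theorem le_sub_div_add_div_of_le_one_sub_mul_add {K : Type*} [Field K] [LinearOrder K]
    [IsStrictOrderedRing K] {a x y r : K} (ha : 0 < a) (h : y ≤ (1 - a) * x + r) :
    x ≤ (x - y) / a + r / a := by
  rw [← add_div, le_div_iff₀ ha]
  linarith

theorem stmt_16_general (T : ℕ) (ε a r : ℕ → ℝ)
    (hε0 : ε 0 = 0)
    (ha : ∀ t, 0 < a t ∧ a t ≤ 1)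
    (hrec : ∀ t, 1 ≤ t → t ≤ T → ε t ≤ (1 - a t) * ε (t - 1) + r t) :
    ∑ t ∈ Icc 1 T, ε (t - 1)
      ≤ ∑ t ∈ Icc 1 (T - 1), (1 / a (t + 1) - 1 / a t) * ε t - ε T / a T
        + ∑ t ∈ Icc 1 T, r t / a t := by
  calc ∑ t ∈ Icc 1 T, ε (t - 1)
      ≤ ∑ t ∈ Icc 1 T, ((ε (t - 1) - ε t) / a t + r t / a t) := by
        refine sum_le_sum fun t ht => ?_
        obtain ⟨ht1, htT⟩ := mem_Icc.mp ht
        exact le_sub_div_add_div_of_le_one_sub_mul_add (ha t).1 (hrec t ht1 htT)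
    _ = _ := by rw [sum_add_distrib, sum_Icc_sub_div_eq_of_eq_zero ε a hε0]

theorem stmt_16 (T : ℕ) (hT : 1 ≤ T) (ε a r : ℕ → ℝ)
    (hε : ∀ t, 0 ≤ ε t) (hε0 : ε 0 = 0)
    (ha : ∀ t, 0 < a t ∧ a t ≤ 1)
    (hmono : ∀ t, a (t + 1) ≤ a t)
    (hr : ∀ t, 0 ≤ r t)
    (hrec : ∀ t, 1 ≤ t → t ≤ T → ε t ≤ (1 - a t) * ε (t - 1) + r t) :
    ∑ t ∈ Icc 1 T, ε (t - 1)
      ≤ ∑ t ∈ Icc 1 (T - 1), (1 / a (t + 1) - 1 / a t) * ε t - ε T / a T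
        + ∑ t ∈ Icc 1 T, r t / a t :=
  stmt_16_general T ε a r hε0 ha hrec
end

section
/- Let g_1, ..., g_T be nonnegative reals with g_t ≤ G² for all t, and set a_t = (1 + ∑_{i=1}^{t-1} g_i)^{−2/3}. Then ∑_{t=1}^T a_t · g_t ≤ G² + 6·(1 + ∑_{t=1}^T g_t)^{1/3}. -/
open Finset

private lemma aux_concave {b c : ℝ} (hb : 0 < b) (hbc : b ≤ c) :
    c - b ≤ 3 * c ^ ((2:ℝ)/3) * (c ^ ((1:ℝ)/3) - b ^ ((1:ℝ)/3)) := by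
  have hc : 0 < c := lt_of_lt_of_le hb hbc
  have key : c ^ ((2:ℝ)/3) * b ^ ((1:ℝ)/3) ≤ 2/3 * c + 1/3 * b :=
    Real.geom_mean_le_arith_mean2_weighted (by norm_num) (by norm_num) hc.le hb.le (by norm_num)
  have h1 : c ^ ((2:ℝ)/3) * c ^ ((1:ℝ)/3) = c := by
    rw [← Real.rpow_add hc]; norm_num
  nlinarith [key, h1]

private lemma two_rpow_third : (7/6 : ℝ) ≤ (2:ℝ) ^ ((1:ℝ)/3) := by
  have h := Real.rpow_le_rpow (by norm_num : (0:ℝ) ≤ (7/6)^(3:ℕ))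
    (by norm_num : ((7/6:ℝ))^(3:ℕ) ≤ 2) (by norm_num : (0:ℝ) ≤ ((3:ℕ):ℝ)⁻¹)
  rw [Real.pow_rpow_inv_natCast (by norm_num) (by norm_num)] at h
  have : ((3:ℕ):ℝ)⁻¹ = (1:ℝ)/3 := by norm_num
  rwa [this] at h

private lemma auxA {s gg v : ℝ} (hs : 0 ≤ s) (hgg : 0 ≤ gg) (hv0 : 0 ≤ v)
    (hvs : v ≤ s) (hvg : v ≤ gg) :
    v / (1+s) ^ ((2:ℝ)/3) ≤ 6 * ((1+s+gg) ^ ((1:ℝ)/3) - (1+s) ^ ((1:ℝ)/3)) := by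
  set b : ℝ := 1 + s with hbdef
  set c : ℝ := 1 + s + gg with hcdef
  have hb : (0:ℝ) < b := by simp only [hbdef]; linarith
  have hbc : b ≤ c := by simp only [hbdef, hcdef]; linarith
  have hc : (0:ℝ) < c := lt_of_lt_of_le hb hbc
  have hΔ := aux_concave hb hbc
  have hB2 : (0:ℝ) < b ^ ((2:ℝ)/3) := Real.rpow_pos_of_pos hb _
  have hC2 : (0:ℝ) < c ^ ((2:ℝ)/3) := Real.rpow_pos_of_pos hc _
  have hΔ0 : (0:ℝ) ≤ c ^ ((1:ℝ)/3) - b ^ ((1:ℝ)/3) := by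
    have := Real.rpow_le_rpow hb.le hbc (by norm_num : (0:ℝ) ≤ (1:ℝ)/3)
    linarith
  rw [div_le_iff₀ hB2]
  rcases le_total c (2*b) with h2 | h2
  · -- c ≤ 2b : use concavity bound
    have hcb : c ^ ((2:ℝ)/3) ≤ 2 * b ^ ((2:ℝ)/3) := by
      have h1 : c ^ ((2:ℝ)/3) ≤ (2*b) ^ ((2:ℝ)/3) :=
        Real.rpow_le_rpow hc.le h2 (by norm_num)
      have h2' : (2*b) ^ ((2:ℝ)/3) = (2:ℝ) ^ ((2:ℝ)/3) * b ^ ((2:ℝ)/3) :=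
        Real.mul_rpow (by norm_num) hb.le
      have h3 : (2:ℝ) ^ ((2:ℝ)/3) ≤ 2 := by
        calc (2:ℝ) ^ ((2:ℝ)/3) ≤ (2:ℝ) ^ (1:ℝ) :=
              Real.rpow_le_rpow_of_exponent_le (by norm_num) (by norm_num)
          _ = 2 := Real.rpow_one 2
      calc c ^ ((2:ℝ)/3) ≤ (2:ℝ) ^ ((2:ℝ)/3) * b ^ ((2:ℝ)/3) := by rw [← h2']; exact h1
        _ ≤ 2 * b ^ ((2:ℝ)/3) := by nlinarith
    have hgcb : c - b = gg := by simp only [hbdef, hcdef]; ring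
    nlinarith
  · -- 2b ≤ c : jump case
    have hc13 : (7/6) * b ^ ((1:ℝ)/3) ≤ c ^ ((1:ℝ)/3) := by
      have h1 : (2*b) ^ ((1:ℝ)/3) ≤ c ^ ((1:ℝ)/3) :=
        Real.rpow_le_rpow (by positivity) h2 (by norm_num)
      have h2' : (2*b) ^ ((1:ℝ)/3) = (2:ℝ) ^ ((1:ℝ)/3) * b ^ ((1:ℝ)/3) :=
        Real.mul_rpow (by norm_num) hb.le
      have hB1 : (0:ℝ) < b ^ ((1:ℝ)/3) := Real.rpow_pos_of_pos hb _
      nlinarith [two_rpow_third]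
    have hbb : b ^ ((2:ℝ)/3) * b ^ ((1:ℝ)/3) = b := by
      rw [← Real.rpow_add hb]; norm_num
    have hB1 : (0:ℝ) < b ^ ((1:ℝ)/3) := Real.rpow_pos_of_pos hb _
    -- v ≤ s ≤ b = b^{2/3} b^{1/3}, so v ≤ b^{1/3} * b^{2/3}
    have hvb : v ≤ b ^ ((1:ℝ)/3) * b ^ ((2:ℝ)/3) := by
      rw [mul_comm, hbb]; simp only [hbdef]; linarith
    nlinarith

private lemma main_ind_s18 (G : ℝ) (g : ℕ → ℝ) (hg : ∀ t, 0 ≤ g t ∧ g t ≤ G ^ 2) (T : ℕ) :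
    ∑ t ∈ Icc 1 T, (1 + ∑ i ∈ Icc 1 (t - 1), g i) ^ (-(2:ℝ)/3) * g t
      ≤ min (∑ t ∈ Icc 1 T, g t) (G ^ 2)
        + 6 * ((1 + ∑ t ∈ Icc 1 T, g t) ^ ((1:ℝ)/3) - 1) := by
  induction T with
  | zero =>
      simp only [Nat.lt_one_iff, Icc_eq_empty_of_lt (by norm_num : (1:ℕ) > 0), sum_empty]
      simp [Real.one_rpow, le_min_iff, sq_nonneg G]
  | succ T ih =>
      have hS0 : 0 ≤ ∑ t ∈ Icc 1 T, g t := sum_nonneg fun i _ => (hg i).1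
      set s : ℝ := ∑ t ∈ Icc 1 T, g t with hsdef
      have hgT0 : 0 ≤ g (T+1) := (hg (T+1)).1
      have hgTG : g (T+1) ≤ G ^ 2 := (hg (T+1)).2
      rw [Finset.sum_Icc_succ_top (Nat.le_add_left 1 T), Finset.sum_Icc_succ_top (Nat.le_add_left 1 T)]
      have hsub : (T + 1) - 1 = T := by omega
      rw [hsub]
      set gn : ℝ := g (T+1) with hgndef
      -- key step inequality
      set u : ℝ := min (s + gn) (G^2) - min s (G^2) with hudef
      have hu0 : 0 ≤ u := by
        have : min s (G^2) ≤ min (s + gn) (G^2) := min_le_min (by linarith) le_rfl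
        simp only [hudef]; linarith
      have hugn : u ≤ gn := by
        have h1 : min (s + gn) (G^2) ≤ min (s + gn) (G^2 + gn) :=
          min_le_min le_rfl (by linarith)
        have h2 : min (s + gn) (G^2 + gn) = min s (G^2) + gn := min_add_add_right s (G^2) gn
        simp only [hudef]; linarith
      have hvs : gn - u ≤ s := by
        rcases le_total s (G^2) with h | h
        · have h1 : gn ≤ min (s + gn) (G^2) := le_min (by linarith) (by linarith)
          simp only [hudef, min_eq_left h]; linarith
        · have : gn ≤ s := le_trans hgTG h
          linarith
      have hstep : (1 + s) ^ (-(2:ℝ)/3) * gn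
          ≤ u + 6 * ((1 + (s + gn)) ^ ((1:ℝ)/3) - (1 + s) ^ ((1:ℝ)/3)) := by
        have hb : (0:ℝ) < 1 + s := by linarith
        have hrw : (1 + s) ^ (-(2:ℝ)/3) = ((1 + s) ^ ((2:ℝ)/3))⁻¹ := by
          rw [← Real.rpow_neg hb.le]; norm_num
        have hB2 : (0:ℝ) < (1 + s) ^ ((2:ℝ)/3) := Real.rpow_pos_of_pos hb _
        have hB2ge1 : (1:ℝ) ≤ (1 + s) ^ ((2:ℝ)/3) :=
          Real.one_le_rpow (by linarith) (by norm_num)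
        have hA := auxA hS0 hgT0 (by linarith : (0:ℝ) ≤ gn - u) hvs (by linarith : gn - u ≤ gn)
        have hsplit : (1 + s) ^ (-(2:ℝ)/3) * gn
            = u / (1 + s) ^ ((2:ℝ)/3) + (gn - u) / (1 + s) ^ ((2:ℝ)/3) := by
          rw [hrw]; field_simp; ring
        have hupart : u / (1 + s) ^ ((2:ℝ)/3) ≤ u := by
          rw [div_le_iff₀ hB2]; nlinarith
        have h13 : (1 + s + gn) = (1 + (s + gn)) := by ring
        rw [hsplit]
        rw [h13] at hA
        linarith
      have hmono : (1 + s) ^ ((1:ℝ)/3) ≤ (1 + (s + gn)) ^ ((1:ℝ)/3) :=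
        Real.rpow_le_rpow (by linarith) (by linarith) (by norm_num)
      simp only [hudef] at hstep
      linarith [ih, hstep]

theorem stmt_18 (T : ℕ) (G : ℝ) (hG : 0 < G) (g : ℕ → ℝ)
    (hg : ∀ t, 0 ≤ g t ∧ g t ≤ G ^ 2) :
    ∑ t ∈ Icc 1 T, (1 + ∑ i ∈ Icc 1 (t - 1), g i) ^ (-(2:ℝ)/3) * g t
      ≤ G ^ 2 + 6 * (1 + ∑ t ∈ Icc 1 T, g t) ^ ((1:ℝ)/3) := by
  have h := main_ind_s18 G g hg T
  have h1 : min (∑ t ∈ Icc 1 T, g t) (G ^ 2) ≤ G ^ 2 := min_le_right _ _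
  linarith
end

section
/- Let f : ℝ^d → ℝ be L-smooth with |f(x) − f(y)| ≤ B for all x, y. Suppose the iterates follow gradient descent with step size η_t = (∑_{i=1}^t ‖∇f(x_i)‖²/a_{i+1})^{−1/3} where a_{i+1} = (1 + ∑_{j=1}^i ‖∇f(x_j)‖²)^{−2/3}, i.e., x_{t+1} = x_t − η_t ∇f(x_t). Then ∑_{t=1}^T ‖∇f(x_t)‖² ≤ B·(1 + ∑_{t=1}^T ‖∇f(x_t)‖²)^{2/9}·(∑_{t=1}^T ‖∇f(x_t)‖²)^{1/3} + L·(∑_{t=1}^T ‖∇f(x_t)‖²)^{2/3}. -/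
open Finset

-- key per-step telescoping inequality
lemma key_step (a b : ℝ) (ha : 0 ≤ a) (hab : a ≤ b) :
    (b - a) * b ^ (-(1:ℝ)/3) ≤ 3/2 * (b ^ ((2:ℝ)/3) - a ^ ((2:ℝ)/3)) := by
  rcases eq_or_lt_of_le (ha.trans hab) with h0 | hb
  · have hb0 : b = 0 := h0.symm
    have ha0 : a = 0 := le_antisymm (hab.trans_eq hb0) ha
    simp [hb0, ha0]
  · have ha' : (0:ℝ) ≤ a := ha
    set u := a ^ ((1:ℝ)/3) with hu
    set v := b ^ ((1:ℝ)/3) with hv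
    have hu0 : 0 ≤ u := Real.rpow_nonneg ha _
    have hv0 : 0 < v := Real.rpow_pos_of_pos hb _
    have huv : u ≤ v := Real.rpow_le_rpow ha hab (by norm_num)
    have ha3 : a = u ^ 3 := by
      rw [hu, ← Real.rpow_natCast (a ^ ((1:ℝ)/3)) 3, ← Real.rpow_mul ha]
      norm_num
    have hb3 : b = v ^ 3 := by
      rw [hv, ← Real.rpow_natCast (b ^ ((1:ℝ)/3)) 3, ← Real.rpow_mul hb.le]
      norm_num
    have ha2 : a ^ ((2:ℝ)/3) = u ^ 2 := by
      rw [hu, ← Real.rpow_natCast (a ^ ((1:ℝ)/3)) 2, ← Real.rpow_mul ha]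
      norm_num
    have hb2 : b ^ ((2:ℝ)/3) = v ^ 2 := by
      rw [hv, ← Real.rpow_natCast (b ^ ((1:ℝ)/3)) 2, ← Real.rpow_mul hb.le]
      norm_num
    have hbneg : b ^ (-(1:ℝ)/3) = v⁻¹ := by
      have h : (-(1:ℝ)/3) = -((1:ℝ)/3) := by norm_num
      rw [h, Real.rpow_neg hb.le, hv]
    rw [ha2, hb2, hbneg]
    nth_rewrite 1 [hb3, ha3]
    have hrw : (v ^ 3 - u ^ 3) * v⁻¹ = (v ^ 3 - u ^ 3) / v := by ring
    rw [hrw, div_le_iff₀ hv0]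
    nlinarith [mul_nonneg (sq_nonneg (v - u)) (by linarith : (0:ℝ) ≤ v + 2*u)]

lemma abel_le (w F : ℕ → ℝ) (B : ℝ) (hw0 : w 0 = 0) (hmono : Monotone w)
    (hF : ∀ i j : ℕ, F i - F j ≤ B) (T : ℕ) :
    ∑ t ∈ Icc 1 T, w t * (F t - F (t + 1)) ≤ w T * B := by
  have tel : ∀ N : ℕ, ∑ t ∈ Icc 1 N, (w t - w (t - 1)) = w N := by
    intro N
    induction N with
    | zero => simp [hw0]
    | succ n ih =>
      rw [Finset.sum_Icc_succ_top (by omega : 1 ≤ n + 1), ih]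
      simp
  have idty : ∀ N : ℕ, ∑ t ∈ Icc 1 N, w t * (F t - F (t + 1))
      = ∑ t ∈ Icc 1 N, (w t - w (t - 1)) * F t - w N * F (N + 1) := by
    intro N
    induction N with
    | zero => simp [hw0]
    | succ n ih =>
      rw [Finset.sum_Icc_succ_top (by omega : 1 ≤ n + 1),
        Finset.sum_Icc_succ_top (by omega : 1 ≤ n + 1), ih]
      simp only [Nat.add_sub_cancel]
      ring
  rw [idty T]
  have hle : ∑ t ∈ Icc 1 T, (w t - w (t - 1)) * F t
      ≤ ∑ t ∈ Icc 1 T, (w t - w (t - 1)) * (B + F (T + 1)) := by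
    apply Finset.sum_le_sum
    intro i _
    have h1 : 0 ≤ w i - w (i - 1) := sub_nonneg.2 (hmono (Nat.sub_le i 1))
    have h2 : F i ≤ B + F (T + 1) := by have := hF i (T + 1); linarith
    exact mul_le_mul_of_nonneg_left h2 h1
  have h3 : ∑ t ∈ Icc 1 T, (w t - w (t - 1)) * (B + F (T + 1)) = w T * (B + F (T + 1)) := by
    rw [← Finset.sum_mul, tel T]
  rw [h3] at hle
  nlinarith [hle]

lemma telescope_Y (G S : ℕ → ℝ) (hG : ∀ t, 0 ≤ G t) (hS0 : S 0 = 0)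
    (hSsucc : ∀ t, S (t + 1) = S t + G (t + 1)) :
    ∀ T, ∑ t ∈ Icc 1 T, G t * (S t) ^ (-(1:ℝ)/3) ≤ 3/2 * (S T) ^ ((2:ℝ)/3) := by
  have hSnn : ∀ t, 0 ≤ S t := by
    intro t
    induction t with
    | zero => simp [hS0]
    | succ n ih => rw [hSsucc]; have := hG (n + 1); linarith
  intro T
  induction T with
  | zero => simp [hS0]
  | succ n ih =>
    rw [Finset.sum_Icc_succ_top (by omega : 1 ≤ n + 1)]
    have hmono : S n ≤ S (n + 1) := by rw [hSsucc]; have := hG (n + 1); linarith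
    have key := key_step (S n) (S (n + 1)) (hSnn n) hmono
    have hGn : G (n + 1) = S (n + 1) - S n := by rw [hSsucc]; ring
    rw [hGn]
    linarith

lemma main_aux (G S b F : ℕ → ℝ) (B L : ℝ) (hB : 0 ≤ B) (hL : 0 ≤ L)
    (hG : ∀ t, 0 ≤ G t)
    (hS0 : S 0 = 0) (hSsucc : ∀ t, S (t + 1) = S t + G (t + 1))
    (hb0 : b 0 = 0) (hbsucc : ∀ t, b (t + 1) = b t + G (t + 1) * (1 + S (t + 1)) ^ ((2:ℝ)/3))
    (hF : ∀ i j : ℕ, F i - F j ≤ B)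
    (hdesc : ∀ t, 1 ≤ t →
      F (t + 1) ≤ F t - b t ^ (-(1:ℝ)/3) * G t + L / 2 * (b t ^ (-(1:ℝ)/3)) ^ 2 * G t)
    (T : ℕ) :
    S T ≤ B * (1 + S T) ^ ((2:ℝ)/9) * (S T) ^ ((1:ℝ)/3) + L * (S T) ^ ((2:ℝ)/3) := by
  have hSnn : ∀ t, 0 ≤ S t := by
    intro t
    induction t with
    | zero => simp [hS0]
    | succ n ih => rw [hSsucc]; have := hG (n + 1); linarith
  have h1S : ∀ t, (0:ℝ) < 1 + S t := fun t => by have := hSnn t; linarith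
  have hrp1 : ∀ t, (1:ℝ) ≤ (1 + S t) ^ ((2:ℝ)/3) := by
    intro t
    have := Real.rpow_le_rpow_of_exponent_le (by have := hSnn t; linarith : (1:ℝ) ≤ 1 + S t)
      (by norm_num : (0:ℝ) ≤ (2:ℝ)/3)
    simpa using this
  have hbnn : ∀ t, 0 ≤ b t := by
    intro t
    induction t with
    | zero => simp [hb0]
    | succ n ih =>
      rw [hbsucc]
      have h2 := mul_nonneg (hG (n + 1)) (Real.rpow_nonneg (h1S (n + 1)).le ((2:ℝ)/3))
      linarith
  have hbmono : Monotone b := by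
    apply monotone_nat_of_le_succ
    intro t
    rw [hbsucc]
    have h2 := mul_nonneg (hG (t + 1)) (Real.rpow_nonneg (h1S (t + 1)).le ((2:ℝ)/3))
    linarith
  have hSb : ∀ t, S t ≤ b t := by
    intro t
    induction t with
    | zero => simp [hS0, hb0]
    | succ n ih =>
      rw [hSsucc, hbsucc]
      have h2 : G (n + 1) ≤ G (n + 1) * (1 + S (n + 1)) ^ ((2:ℝ)/3) :=
        le_mul_of_one_le_right (hG (n + 1)) (hrp1 (n + 1))
      linarith
  -- the weight function
  set w : ℕ → ℝ := fun t => b t ^ ((1:ℝ)/3) with hw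
  have hw0 : w 0 = 0 := by simp [hw, hb0]
  have hwnn : ∀ t, 0 ≤ w t := fun t => Real.rpow_nonneg (hbnn t) _
  have hwmono : Monotone w := fun i j hij =>
    Real.rpow_le_rpow (hbnn i) (hbmono hij) (by norm_num)
  -- per-step inequality
  have hstep : ∀ t, 1 ≤ t →
      G t ≤ w t * (F t - F (t + 1)) + L / 2 * (G t * b t ^ (-(1:ℝ)/3)) := by
    intro t ht
    rcases eq_or_lt_of_le (hbnn t) with hbt0 | hbt
    · -- b t = 0, hence G t = 0
      obtain ⟨k, rfl⟩ : ∃ k, t = k + 1 := ⟨t - 1, by omega⟩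
      have hbk : b (k + 1) = 0 := hbt0.symm
      have hb' := hbsucc k
      have hterm : 0 ≤ G (k + 1) * (1 + S (k + 1)) ^ ((2:ℝ)/3) :=
        mul_nonneg (hG (k + 1)) (Real.rpow_nonneg (h1S (k + 1)).le _)
      have hbknn := hbnn k
      have hmul0 : G (k + 1) * (1 + S (k + 1)) ^ ((2:ℝ)/3) = 0 := by
        rw [hbk] at hb'; linarith
      have hGt0 : G (k + 1) = 0 := by
        rcases mul_eq_zero.1 hmul0 with h | h
        · exact h
        · exact absurd h (ne_of_gt (Real.rpow_pos_of_pos (h1S (k + 1)) _))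
      have hwt0 : w (k + 1) = 0 := by
        simp only [hw, hbk]
        simp
      rw [hGt0, hwt0]
      simp
    · have h1 : b t ^ ((1:ℝ)/3) * b t ^ (-(1:ℝ)/3) = 1 := by
        rw [← Real.rpow_add hbt]
        norm_num
      have h2 : b t ^ ((1:ℝ)/3) * (b t ^ (-(1:ℝ)/3)) ^ 2 = b t ^ (-(1:ℝ)/3) := by
        rw [pow_two, ← mul_assoc, ← Real.rpow_add hbt, ← Real.rpow_add hbt]
        norm_num
      have h3 : b t ^ (-(1:ℝ)/3) * G t - L / 2 * (b t ^ (-(1:ℝ)/3)) ^ 2 * G t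
          ≤ F t - F (t + 1) := by
        have := hdesc t ht
        linarith
      have h4 := mul_le_mul_of_nonneg_left h3 (hwnn t)
      have h5 : w t * (b t ^ (-(1:ℝ)/3) * G t - L / 2 * (b t ^ (-(1:ℝ)/3)) ^ 2 * G t)
          = G t - L / 2 * (G t * b t ^ (-(1:ℝ)/3)) := by
        simp only [hw]
        calc b t ^ ((1:ℝ)/3) * (b t ^ (-(1:ℝ)/3) * G t
              - L / 2 * (b t ^ (-(1:ℝ)/3)) ^ 2 * G t)
            = (b t ^ ((1:ℝ)/3) * b t ^ (-(1:ℝ)/3)) * G t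
              - L / 2 * (b t ^ ((1:ℝ)/3) * (b t ^ (-(1:ℝ)/3)) ^ 2) * G t := by ring
          _ = G t - L / 2 * (G t * b t ^ (-(1:ℝ)/3)) := by rw [h1, h2]; ring
      rw [h5] at h4
      linarith
  -- sum it up
  have hST : S T = ∑ t ∈ Icc 1 T, G t := by
    induction T with
    | zero => simp [hS0]
    | succ n ih => rw [Finset.sum_Icc_succ_top (by omega : 1 ≤ n + 1), hSsucc, ih]
  have hsum : S T ≤ (∑ t ∈ Icc 1 T, w t * (F t - F (t + 1)))
      + L / 2 * ∑ t ∈ Icc 1 T, G t * b t ^ (-(1:ℝ)/3) := by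
    rw [hST, Finset.mul_sum, ← Finset.sum_add_distrib]
    apply Finset.sum_le_sum
    intro i hi
    exact hstep i (Finset.mem_Icc.1 hi).1
  have habel := abel_le w F B hw0 hwmono hF T
  -- bound Y
  have hY1 : ∑ t ∈ Icc 1 T, G t * b t ^ (-(1:ℝ)/3)
      ≤ ∑ t ∈ Icc 1 T, G t * S t ^ (-(1:ℝ)/3) := by
    apply Finset.sum_le_sum
    intro i hi
    obtain ⟨hi1, _⟩ := Finset.mem_Icc.1 hi
    rcases eq_or_lt_of_le (hG i) with hGi0 | hGi
    · rw [← hGi0]; simp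
    · have hSipos : 0 < S i := by
        obtain ⟨k, rfl⟩ : ∃ k, i = k + 1 := ⟨i - 1, by omega⟩
        rw [hSsucc]; have := hSnn k; linarith
      have hbipos : 0 < b i := lt_of_lt_of_le hSipos (hSb i)
      have hneg : (-(1:ℝ)/3) = -((1:ℝ)/3) := by norm_num
      have hrle : b i ^ (-(1:ℝ)/3) ≤ S i ^ (-(1:ℝ)/3) := by
        rw [hneg, Real.rpow_neg (hbnn i), Real.rpow_neg (hSnn i)]
        apply inv_anti₀ (Real.rpow_pos_of_pos hSipos _)
        exact Real.rpow_le_rpow (hSnn i) (hSb i) (by norm_num)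
      exact mul_le_mul_of_nonneg_left hrle (hG i)
  have hY2 := telescope_Y G S hG hS0 hSsucc T
  -- bound w T
  have hbles : ∀ N, b N ≤ (1 + S N) ^ ((2:ℝ)/3) * S N := by
    intro N
    induction N with
    | zero => simp [hb0, hS0]
    | succ n ih =>
      rw [hbsucc]
      have hmono23 : (1 + S n) ^ ((2:ℝ)/3) ≤ (1 + S (n + 1)) ^ ((2:ℝ)/3) := by
        apply Real.rpow_le_rpow (h1S n).le _ (by norm_num)
        rw [hSsucc]; have := hG (n + 1); linarith
      have h2 := mul_le_mul_of_nonneg_right hmono23 (hSnn n)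
      have h6 : (1 + S (n + 1)) ^ ((2:ℝ)/3) * S (n + 1)
          = (1 + S (n + 1)) ^ ((2:ℝ)/3) * S n + (1 + S (n + 1)) ^ ((2:ℝ)/3) * G (n + 1) := by
        rw [hSsucc n]; ring
      have h7 : G (n + 1) * (1 + S (n + 1)) ^ ((2:ℝ)/3)
          = (1 + S (n + 1)) ^ ((2:ℝ)/3) * G (n + 1) := by ring
      rw [h6, h7]
      linarith
  have hwT : w T ≤ (1 + S T) ^ ((2:ℝ)/9) * (S T) ^ ((1:ℝ)/3) := by
    have h1 : w T ≤ ((1 + S T) ^ ((2:ℝ)/3) * S T) ^ ((1:ℝ)/3) := by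
      simp only [hw]
      exact Real.rpow_le_rpow (hbnn T) (hbles T) (by norm_num)
    have h2 : ((1 + S T) ^ ((2:ℝ)/3) * S T) ^ ((1:ℝ)/3)
        = (1 + S T) ^ ((2:ℝ)/9) * (S T) ^ ((1:ℝ)/3) := by
      rw [Real.mul_rpow (Real.rpow_nonneg (h1S T).le _) (hSnn T),
        ← Real.rpow_mul (h1S T).le]
      norm_num
    rw [h2] at h1
    exact h1
  -- combine
  have hfin1 : w T * B ≤ B * ((1 + S T) ^ ((2:ℝ)/9) * (S T) ^ ((1:ℝ)/3)) := by
    rw [mul_comm]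
    exact mul_le_mul_of_nonneg_left hwT hB
  have hfin2 : L / 2 * ∑ t ∈ Icc 1 T, G t * b t ^ (-(1:ℝ)/3)
      ≤ L / 2 * (3/2 * (S T) ^ ((2:ℝ)/3)) := by
    apply mul_le_mul_of_nonneg_left _ (by linarith : (0:ℝ) ≤ L / 2)
    exact hY1.trans hY2
  have hrpnn : 0 ≤ (S T) ^ ((2:ℝ)/3) := Real.rpow_nonneg (hSnn T) _
  nlinarith [hsum, habel, hfin1, hfin2, mul_nonneg hL hrpnn]

lemma descent_lemma {E : Type*} [NormedAddCommGroup E] [InnerProductSpace ℝ E]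
    [CompleteSpace E] (f : E → ℝ) (L : ℝ) (hL : 0 ≤ L) (hdiff : Differentiable ℝ f)
    (hlip : ∀ x y, ‖gradient f x - gradient f y‖ ≤ L * ‖x - y‖)
    (x v : E) :
    f (x + v) ≤ f x + (inner ℝ (gradient f x) v : ℝ) + L / 2 * ‖v‖ ^ 2 := by
  have hc : ∀ s : ℝ, HasDerivAt (fun s : ℝ => x + s • v) v s := by
    intro s
    simpa using ((hasDerivAt_id s).smul_const v).const_add x
  have hD : ∀ s : ℝ, HasDerivAt (fun s : ℝ => f (x + s • v))
      (inner ℝ (gradient f (x + s • v)) v : ℝ) s := by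
    intro s
    have h1 : HasGradientAt f (gradient f (x + s • v)) (x + s • v) :=
      (hdiff (x + s • v)).hasGradientAt
    have h2 : HasFDerivAt f (InnerProductSpace.toDual ℝ E (gradient f (x + s • v)))
        (x + s • v) := hasGradientAt_iff_hasFDerivAt.1 h1
    have h3 := h2.comp_hasDerivAt s (hc s)
    simpa [InnerProductSpace.toDual_apply_apply, Function.comp_def] using h3
  have hgradcont : Continuous (gradient f) := by
    have hgl : LipschitzWith (Real.toNNReal L) (gradient f) := by
      apply LipschitzWith.of_dist_le_mul
      intro p q
      rw [dist_eq_norm, dist_eq_norm]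
      calc ‖gradient f p - gradient f q‖ ≤ L * ‖p - q‖ := hlip p q
        _ = (Real.toNNReal L : ℝ) * ‖p - q‖ := by rw [Real.coe_toNNReal L hL]
    exact hgl.continuous
  have hcont : Continuous fun s : ℝ => (inner ℝ (gradient f (x + s • v)) v : ℝ) := by
    apply Continuous.inner
    · exact hgradcont.comp (by continuity)
    · exact continuous_const
  have hint : f (x + v) - f x
      = ∫ s in (0:ℝ)..1, (inner ℝ (gradient f (x + s • v)) v : ℝ) := by
    have h := intervalIntegral.integral_eq_sub_of_hasDerivAt
      (fun s _ => hD s) (hcont.intervalIntegrable 0 1)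
    rw [h]
    norm_num
  have hbnd : ∫ s in (0:ℝ)..1, (inner ℝ (gradient f (x + s • v)) v : ℝ)
      ≤ (inner ℝ (gradient f x) v : ℝ) + L / 2 * ‖v‖ ^ 2 := by
    have hmono : ∀ s ∈ Set.Icc (0:ℝ) 1,
        (inner ℝ (gradient f (x + s • v)) v : ℝ)
          ≤ (inner ℝ (gradient f x) v : ℝ) + s * (L * ‖v‖ ^ 2) := by
      intro s hs
      have hinner : (inner ℝ (gradient f (x + s • v)) v : ℝ)
          - (inner ℝ (gradient f x) v : ℝ)
          = (inner ℝ (gradient f (x + s • v) - gradient f x) v : ℝ) := by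
        rw [inner_sub_left]
      have h1 : (inner ℝ (gradient f (x + s • v) - gradient f x) v : ℝ)
          ≤ ‖gradient f (x + s • v) - gradient f x‖ * ‖v‖ := real_inner_le_norm _ _
      have h2 : ‖gradient f (x + s • v) - gradient f x‖ ≤ L * (s * ‖v‖) := by
        have := hlip (x + s • v) x
        have hxx : x + s • v - x = s • v := by abel
        rw [hxx, norm_smul, Real.norm_eq_abs, abs_of_nonneg hs.1] at this
        exact this
      have h3 : ‖gradient f (x + s • v) - gradient f x‖ * ‖v‖
          ≤ L * (s * ‖v‖) * ‖v‖ := mul_le_mul_of_nonneg_right h2 (norm_nonneg v)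
      have h4 : L * (s * ‖v‖) * ‖v‖ = s * (L * ‖v‖ ^ 2) := by ring
      nlinarith [hinner, h1, h3]
    calc ∫ s in (0:ℝ)..1, (inner ℝ (gradient f (x + s • v)) v : ℝ)
        ≤ ∫ s in (0:ℝ)..1, ((inner ℝ (gradient f x) v : ℝ) + s * (L * ‖v‖ ^ 2)) := by
          apply intervalIntegral.integral_mono_on (by norm_num)
            (hcont.intervalIntegrable 0 1)
            (Continuous.intervalIntegrable (by continuity) 0 1) hmono
      _ = (inner ℝ (gradient f x) v : ℝ) + L / 2 * ‖v‖ ^ 2 := by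
          rw [intervalIntegral.integral_add intervalIntegrable_const
            ((Continuous.intervalIntegrable (by continuity) 0 1))]
          simp [intervalIntegral.integral_mul_const, integral_id]
          ring
  linarith [hint, hbnd]

theorem stmt_19 (n T : ℕ) (f : EuclideanSpace ℝ (Fin n) → ℝ) (L B : ℝ)
    (hL : 0 ≤ L) (hB : 0 ≤ B)
    (hdiff : Differentiable ℝ f)
    (hlip : ∀ x y, ‖gradient f x - gradient f y‖ ≤ L * ‖x - y‖)
    (hbound : ∀ x y, |f x - f y| ≤ B)
    (x : ℕ → EuclideanSpace ℝ (Fin n)) (η a : ℕ → ℝ)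
    (ha : ∀ t, a (t + 1) = (1 + ∑ j ∈ Icc 1 t, ‖gradient f (x j)‖ ^ 2) ^ (-(2:ℝ)/3))
    (hη : ∀ t, η t = (∑ i ∈ Icc 1 t, ‖gradient f (x i)‖ ^ 2 / a (i + 1)) ^ (-(1:ℝ)/3))
    (hx : ∀ t, 1 ≤ t → x (t + 1) = x t - η t • gradient f (x t))
    (hg1 : gradient f (x 1) ≠ 0) :
    ∑ t ∈ Icc 1 T, ‖gradient f (x t)‖ ^ 2
      ≤ B * (1 + ∑ t ∈ Icc 1 T, ‖gradient f (x t)‖ ^ 2) ^ ((2:ℝ)/9)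
            * (∑ t ∈ Icc 1 T, ‖gradient f (x t)‖ ^ 2) ^ ((1:ℝ)/3)
        + L * (∑ t ∈ Icc 1 T, ‖gradient f (x t)‖ ^ 2) ^ ((2:ℝ)/3) := by
  have hGnn : ∀ t : ℕ, (0:ℝ) ≤ ‖gradient f (x t)‖ ^ 2 := fun t => by positivity
  have hSnn : ∀ t : ℕ, (0:ℝ) ≤ ∑ j ∈ Icc 1 t, ‖gradient f (x j)‖ ^ 2 :=
    fun t => Finset.sum_nonneg fun i _ => hGnn i
  have h1S : ∀ t : ℕ, (0:ℝ) < 1 + ∑ j ∈ Icc 1 t, ‖gradient f (x j)‖ ^ 2 :=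
    fun t => by have := hSnn t; linarith
  have hapos : ∀ t : ℕ, 0 < a (t + 1) := fun t => by
    rw [ha t]; exact Real.rpow_pos_of_pos (h1S t) _
  have hbnn : ∀ t : ℕ, (0:ℝ) ≤ ∑ i ∈ Icc 1 t, ‖gradient f (x i)‖ ^ 2 / a (i + 1) :=
    fun t => Finset.sum_nonneg fun i _ => div_nonneg (hGnn i) (hapos i).le
  have hηnn : ∀ t, 0 ≤ η t := fun t => by
    rw [hη t]; exact Real.rpow_nonneg (hbnn t) _
  have hS0' : (∑ j ∈ Icc 1 0, ‖gradient f (x j)‖ ^ 2) = 0 := by simp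
  have hSsucc' : ∀ t : ℕ, (∑ j ∈ Icc 1 (t + 1), ‖gradient f (x j)‖ ^ 2)
      = (∑ j ∈ Icc 1 t, ‖gradient f (x j)‖ ^ 2) + ‖gradient f (x (t + 1))‖ ^ 2 :=
    fun t => Finset.sum_Icc_succ_top (by omega) _
  have hb0' : (∑ i ∈ Icc 1 0, ‖gradient f (x i)‖ ^ 2 / a (i + 1)) = 0 := by simp
  have hbsucc' : ∀ t : ℕ, (∑ i ∈ Icc 1 (t + 1), ‖gradient f (x i)‖ ^ 2 / a (i + 1))
      = (∑ i ∈ Icc 1 t, ‖gradient f (x i)‖ ^ 2 / a (i + 1))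
        + ‖gradient f (x (t + 1))‖ ^ 2
          * (1 + ∑ j ∈ Icc 1 (t + 1), ‖gradient f (x j)‖ ^ 2) ^ ((2:ℝ)/3) := by
    intro t
    rw [Finset.sum_Icc_succ_top (by omega : 1 ≤ t + 1)]
    congr 1
    rw [ha (t + 1), show (-(2:ℝ)/3) = -((2:ℝ)/3) from by norm_num,
      Real.rpow_neg (h1S (t + 1)).le, div_inv_eq_mul]
  have hF' : ∀ i j : ℕ, f (x i) - f (x j) ≤ B :=
    fun i j => (le_abs_self _).trans (hbound _ _)
  have hdesc' : ∀ t : ℕ, 1 ≤ t →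
      f (x (t + 1)) ≤ f (x t)
        - (∑ i ∈ Icc 1 t, ‖gradient f (x i)‖ ^ 2 / a (i + 1)) ^ (-(1:ℝ)/3)
            * ‖gradient f (x t)‖ ^ 2
        + L / 2 * ((∑ i ∈ Icc 1 t, ‖gradient f (x i)‖ ^ 2 / a (i + 1)) ^ (-(1:ℝ)/3)) ^ 2
            * ‖gradient f (x t)‖ ^ 2 := by
    intro t ht
    have hd := descent_lemma f L hL hdiff hlip (x t) (-(η t • gradient f (x t)))
    have hx' : x t + -(η t • gradient f (x t)) = x (t + 1) := by
      rw [hx t ht, sub_eq_add_neg]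
    rw [hx'] at hd
    have hinner : (inner ℝ (gradient f (x t)) (-(η t • gradient f (x t))) : ℝ)
        = -(η t * ‖gradient f (x t)‖ ^ 2) := by
      rw [inner_neg_right, real_inner_smul_right, real_inner_self_eq_norm_sq]
    have hnorm : ‖-(η t • gradient f (x t))‖ ^ 2 = η t ^ 2 * ‖gradient f (x t)‖ ^ 2 := by
      rw [norm_neg, norm_smul, Real.norm_eq_abs, abs_of_nonneg (hηnn t), mul_pow]
    rw [hinner, hnorm] at hd
    rw [← hη t]
    nlinarith [hd]
  exact main_aux (fun t => ‖gradient f (x t)‖ ^ 2)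
    (fun t => ∑ j ∈ Icc 1 t, ‖gradient f (x j)‖ ^ 2)
    (fun t => ∑ i ∈ Icc 1 t, ‖gradient f (x i)‖ ^ 2 / a (i + 1))
    (fun t => f (x t)) B L hB hL hGnn hS0' hSsucc' hb0' hbsucc' hF' hdesc' T
end
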